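/- The tension region T(X;Y) is unchanged if Z is restricted to alphabets of size at most |𝒳|·|𝒴| + 3, and consequently T(X;Y) is a compact subset of ℝ³. -/

import Mathlib

open Real BigOperators Finset

section Defs
variable {Ω : Type} [Fintype Ω]

/-- `p` is a probability mass function on the finite sample space `Ω`. -/
def IsPmf (p : Ω → ℝ) : Prop := (∀ ω, 0 ≤ p ω) ∧ ∑ ω, p ω = 1

/-- Distribution of the random variable `f` under `p`. -/
noncomputable def distOf (p : Ω → ℝ) {α : Type} [Fintype α] [DecidableEq α]
    (f : Ω → α) : α → ℝ := fun a => ∑ ω, if f ω = a then p ω else 0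

/-- Shannon entropy (in nats) of the random variable `f` under `p`. -/
noncomputable def ent (p : Ω → ℝ) {α : Type} [Fintype α] [DecidableEq α]
    (f : Ω → α) : ℝ := ∑ a, Real.negMulLog (distOf p f a)

/-- Mutual information `I(f;g)` under `p`. -/
noncomputable def mi (p : Ω → ℝ) {α β : Type} [Fintype α] [DecidableEq α]
    [Fintype β] [DecidableEq β] (f : Ω → α) (g : Ω → β) : ℝ :=
  ent p f + ent p g - ent p (fun ω => (f ω, g ω))

/-- Conditional mutual information `I(f;g|h)` under `p`. -/
noncomputable def cmi (p : Ω → ℝ) {α β γ : Type} [Fintype α] [DecidableEq α]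
    [Fintype β] [DecidableEq β] [Fintype γ] [DecidableEq γ]
    (f : Ω → α) (g : Ω → β) (h : Ω → γ) : ℝ :=
  ent p (fun ω => (f ω, h ω)) + ent p (fun ω => (g ω, h ω))
    - ent p (fun ω => (f ω, g ω, h ω)) - ent p h

end Defs

/-- Tension region of `(X,Y)`: the set of triples
`(I(X;Z|Y), I(Y;Z|X), I(X;Y|Z))` as `Z` ranges over all finitely supported
random variables jointly distributed with `(X,Y)`. -/
def tension {Ω : Type} [Fintype Ω] {α β : Type} [Fintype α] [DecidableEq α]
    [Fintype β] [DecidableEq β] (p : Ω → ℝ) (X : Ω → α) (Y : Ω → β) :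
    Set (ℝ × ℝ × ℝ) :=
  { t | ∃ (m : ℕ) (q : α × β × Fin m → ℝ), IsPmf q ∧
      distOf q (fun w => (w.1, w.2.1)) = distOf p (fun ω => (X ω, Y ω)) ∧
      t = (cmi q (fun w => w.1) (fun w => w.2.2) (fun w => w.2.1),
           cmi q (fun w => w.2.1) (fun w => w.2.2) (fun w => w.1),
           cmi q (fun w => w.1) (fun w => w.2.1) (fun w => w.2.2)) }

/-!
Write `Z` as a mixture index: a joint law of `(X, Y, Z)` is `q(x, y, z) = w(z) r_z(x, y)`.
By the chain rule `H(U, Z) = H(Z) + ∑ w(z) H_{r_z}(U)`, the `(X, Y)`-marginal `∑ w(z) r_z` and the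
three conditional mutual informations depend on `(w, r)` only through the average of
`r ↦ (r, H_r(X), H_r(Y), H_r(X, Y))`. That average lies in the convex hull of the image of the
simplex, a set contained in the hyperplane `∑ r = 1` of a space of dimension `|𝒳||𝒴| + 3`, so by
Carathéodory `|𝒳||𝒴| + 3` letters suffice. Hence `T(X;Y)` is a finite union of continuous images of
compact sets of distributions.
-/

section Entropy
variable {Ω γ δ : Type} [Fintype Ω] [Fintype γ] [DecidableEq γ] [Fintype δ] [DecidableEq δ]

theorem IsPmf.nonempty {p : Ω → ℝ} (hp : IsPmf p) : Nonempty Ω :=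
  ⟨(Finset.exists_ne_zero_of_sum_ne_zero (hp.2 ▸ one_ne_zero)).choose⟩

theorem sum_distOf (p : Ω → ℝ) (f : Ω → γ) : ∑ c, distOf p f c = ∑ ω, p ω := by
  simp only [distOf]
  rw [Finset.sum_comm]
  simp

theorem distOf_comp (p : Ω → ℝ) (f : Ω → γ) (g : γ → δ) :
    distOf p (g ∘ f) = distOf (distOf p f) g := by
  funext d
  simp only [distOf, Finset.ite_sum_zero]
  rw [Finset.sum_comm]
  refine Finset.sum_congr rfl fun ω _ => ?_
  rw [Fintype.sum_eq_single (f ω) (fun c hc => by simp [Ne.symm hc])]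
  simp

theorem ent_comp_injective {e : γ → δ} (he : Function.Injective e) (p : Ω → ℝ) (f : Ω → γ) :
    ent p (fun ω => e (f ω)) = ent p f := by
  refine (Fintype.sum_of_injective e he _ _ (fun d hd => ?_) (fun c => ?_)).symm
  · rw [Set.mem_range, not_exists] at hd
    simp [distOf, hd]
  · simp only [distOf, he.eq_iff]

theorem ent_const {p : Ω → ℝ} (hp : IsPmf p) (c : γ) : ent p (fun _ => c) = 0 := by
  rw [ent, Fintype.sum_eq_single c (fun d hd => by simp [distOf, Ne.symm hd])]
  simp [distOf, hp.2]

@[fun_prop]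
theorem continuous_distOf (f : Ω → γ) : Continuous fun p : Ω → ℝ => distOf p f :=
  continuous_pi fun _ => continuous_finsetSum _ fun ω _ =>
    (continuous_apply ω).if_const _ continuous_const

@[fun_prop]
theorem continuous_ent (f : Ω → γ) : Continuous fun p : Ω → ℝ => ent p f :=
  continuous_finsetSum _ fun c _ =>
    continuous_negMulLog.comp ((continuous_apply c).comp (continuous_distOf f))

end Entropy

section Mixture
variable {α β ζ γ δ : Type} [Fintype α] [Fintype β] [Fintype ζ] [Fintype γ] [DecidableEq γ]
  [Fintype δ] [DecidableEq δ]

noncomputable def mixture (w : ζ → ℝ) (r : ζ → α × β → ℝ) : α × β × ζ → ℝ :=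
  fun ω => w ω.2.2 * r ω.2.2 (ω.1, ω.2.1)

theorem sum_prod_prod_eq_sum_sum {M : Type} [AddCommMonoid M] (f : α × β × ζ → M) :
    ∑ ω, f ω = ∑ s : α × β, ∑ z, f (s.1, s.2, z) := by
  rw [← (Equiv.prodAssoc α β ζ).sum_comp, Fintype.sum_prod_type]
  rfl

theorem isPmf_mixture {w : ζ → ℝ} {r : ζ → α × β → ℝ} (hw : IsPmf w) (hr : ∀ z, IsPmf (r z)) :
    IsPmf (mixture w r) := by
  refine ⟨fun ω => mul_nonneg (hw.1 _) ((hr _).1 _), ?_⟩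
  simp only [sum_prod_prod_eq_sum_sum, mixture]
  rw [Finset.sum_comm]
  simp only [← Finset.mul_sum, (hr _).2, mul_one, hw.2]

variable {w : ζ → ℝ} {r : ζ → α × β → ℝ}

theorem distOf_mixture_marginal [DecidableEq α] [DecidableEq β] :
    distOf (mixture w r) (fun ω => (ω.1, ω.2.1)) = ∑ z, w z • r z := by
  funext s
  simp [distOf, mixture, sum_prod_prod_eq_sum_sum, Finset.sum_apply]

theorem ent_mixture_comp [DecidableEq α] [DecidableEq β] (g : α × β → γ) :
    ent (mixture w r) (fun ω => g (ω.1, ω.2.1)) = ent (∑ z, w z • r z) g := by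
  rw [ent, show (fun ω => g (ω.1, ω.2.1)) = g ∘ fun ω : α × β × ζ => (ω.1, ω.2.1) from rfl,
    distOf_comp, distOf_mixture_marginal, ent]

theorem distOf_mixture_prod [DecidableEq ζ] (g : α × β → γ) (c : γ) (z : ζ) :
    distOf (mixture w r) (fun ω => (g (ω.1, ω.2.1), ω.2.2)) (c, z) = w z * distOf (r z) g c := by
  simp [distOf, mixture, sum_prod_prod_eq_sum_sum, Finset.mul_sum, ite_and]

theorem ent_mixture_prod [DecidableEq ζ] (hr : ∀ z, IsPmf (r z))
    (g : α × β → γ) :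
    ent (mixture w r) (fun ω => (g (ω.1, ω.2.1), ω.2.2)) =
      ∑ z, w z * ent (r z) g + ∑ z, negMulLog (w z) := by
  rw [ent, Fintype.sum_prod_type, Finset.sum_comm, ← Finset.sum_add_distrib]
  refine Finset.sum_congr rfl fun z _ => ?_
  simp only [distOf_mixture_prod, negMulLog_mul, Finset.sum_add_distrib, ← Finset.mul_sum,
    ← Finset.sum_mul, sum_distOf, (hr z).2, one_mul, ent]
  exact add_comm _ _

theorem ent_mixture_comp_prod [DecidableEq ζ] (hr : ∀ z, IsPmf (r z))
    (g : α × β → γ) {e : γ × ζ → δ} (he : Function.Injective e) :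
    ent (mixture w r) (fun ω => e (g (ω.1, ω.2.1), ω.2.2)) =
      ∑ z, w z * ent (r z) g + ∑ z, negMulLog (w z) :=
  (ent_comp_injective he _ _).trans (ent_mixture_prod hr g)

end Mixture

section TensionPoint
variable {α β ζ : Type} [Fintype α] [DecidableEq α] [Fintype β] [DecidableEq β]
  [Fintype ζ] [DecidableEq ζ]

noncomputable def tensionPoint (q : α × β × ζ → ℝ) : ℝ × ℝ × ℝ :=
  (cmi q (fun w => w.1) (fun w => w.2.2) (fun w => w.2.1),
   cmi q (fun w => w.2.1) (fun w => w.2.2) (fun w => w.1),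
   cmi q (fun w => w.1) (fun w => w.2.1) (fun w => w.2.2))

noncomputable def entropyLift (r : α × β → ℝ) : (α × β → ℝ) × ℝ × ℝ × ℝ :=
  (r, ent r Prod.fst, ent r Prod.snd, ent r id)

noncomputable def tensionOfAverage (v : (α × β → ℝ) × ℝ × ℝ × ℝ) : ℝ × ℝ × ℝ :=
  (ent v.1 id - ent v.1 Prod.snd + v.2.2.1 - v.2.2.2,
   ent v.1 id - ent v.1 Prod.fst + v.2.1 - v.2.2.2,
   v.2.1 + v.2.2.1 - v.2.2.2)

theorem tensionPoint_mixture (w : ζ → ℝ) {r : ζ → α × β → ℝ} (hr : ∀ z, IsPmf (r z)) :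
    tensionPoint (mixture w r) = tensionOfAverage (∑ z, w z • entropyLift (r z)) := by
  set q := mixture w r
  set μ := ∑ z, w z • r z
  set Hw := ∑ z, negMulLog (w z)
  have hXY : ent q (fun ω => (ω.1, ω.2.1)) = ent μ id := ent_mixture_comp id
  have hYX : ent q (fun ω => (ω.2.1, ω.1)) = ent μ id :=
    (ent_mixture_comp Prod.swap).trans (ent_comp_injective Prod.swap_injective μ id)
  have hX : ent q (fun ω => ω.1) = ent μ Prod.fst := ent_mixture_comp Prod.fst
  have hY : ent q (fun ω => ω.2.1) = ent μ Prod.snd := ent_mixture_comp Prod.snd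
  have hZ : ent q (fun ω => ω.2.2) = Hw := by
    rw [ent_mixture_comp_prod hr (fun _ => ()) (e := Prod.snd) (fun x y h => Prod.ext rfl h)]
    simp [ent_const (hr _), Hw]
  have hXZ : ent q (fun ω => (ω.1, ω.2.2)) = ∑ z, w z * ent (r z) Prod.fst + Hw :=
    ent_mixture_comp_prod hr Prod.fst (e := id) Function.injective_id
  have hYZ : ent q (fun ω => (ω.2.1, ω.2.2)) = ∑ z, w z * ent (r z) Prod.snd + Hw :=
    ent_mixture_comp_prod hr Prod.snd (e := id) Function.injective_id
  have hZX : ent q (fun ω => (ω.2.2, ω.1)) = ∑ z, w z * ent (r z) Prod.fst + Hw :=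
    ent_mixture_comp_prod hr Prod.fst (e := Prod.swap) Prod.swap_injective
  have hZY : ent q (fun ω => (ω.2.2, ω.2.1)) = ∑ z, w z * ent (r z) Prod.snd + Hw :=
    ent_mixture_comp_prod hr Prod.snd (e := Prod.swap) Prod.swap_injective
  have hXYZ : ent q (fun ω => (ω.1, ω.2.1, ω.2.2)) = ∑ z, w z * ent (r z) id + Hw :=
    ent_mixture_comp_prod hr id (e := fun x => (x.1.1, x.1.2, x.2))
      (fun x y h => by simp_all [Prod.ext_iff])
  have hXZY : ent q (fun ω => (ω.1, ω.2.2, ω.2.1)) = ∑ z, w z * ent (r z) id + Hw :=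
    ent_mixture_comp_prod hr id (e := fun x => (x.1.1, x.2, x.1.2))
      (fun x y h => by simp_all [Prod.ext_iff])
  have hYZX : ent q (fun ω => (ω.2.1, ω.2.2, ω.1)) = ∑ z, w z * ent (r z) id + Hw :=
    ent_mixture_comp_prod hr id (e := fun x => (x.1.2, x.2, x.1.1))
      (fun x y h => by simp_all [Prod.ext_iff])
  simp only [tensionPoint, cmi, hXY, hYX, hX, hY, hZ, hXZ, hYZ, hZX, hZY, hXYZ, hXZY, hYZX,
    tensionOfAverage, entropyLift, Prod.fst_sum, Prod.snd_sum, Prod.smul_fst, Prod.smul_snd,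
    smul_eq_mul, Prod.mk.injEq]
  exact ⟨by ring, by ring, by ring⟩

end TensionPoint

theorem exists_eq_mixture {α β ζ : Type} [Fintype α] [Fintype β] [Fintype ζ]
    {q : α × β × ζ → ℝ} (hq : IsPmf q) :
    ∃ (w : ζ → ℝ) (r : ζ → α × β → ℝ), IsPmf w ∧ (∀ z, IsPmf (r z)) ∧ q = mixture w r := by
  have : Nonempty (α × β) := let ⟨a, b, _⟩ := hq.nonempty.some; ⟨(a, b)⟩
  have hcard : (Fintype.card (α × β) : ℝ) ≠ 0 := Nat.cast_ne_zero.2 Fintype.card_ne_zero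
  set w : ζ → ℝ := fun z => ∑ s : α × β, q (s.1, s.2, z)
  set r : ζ → α × β → ℝ := fun z s =>
    if w z = 0 then (Fintype.card (α × β) : ℝ)⁻¹ else q (s.1, s.2, z) / w z
  have hw_nonneg : ∀ z, 0 ≤ w z := fun z => Finset.sum_nonneg fun s _ => hq.1 _
  have hq_le : ∀ (s : α × β) z, q (s.1, s.2, z) ≤ w z := fun s z =>
    Finset.single_le_sum (f := fun s : α × β => q (s.1, s.2, z)) (fun _ _ => hq.1 _)
      (Finset.mem_univ s)
  refine ⟨w, r, ⟨hw_nonneg, ?_⟩, fun z => ⟨fun s => ?_, ?_⟩, ?_⟩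
  · rw [← hq.2, sum_prod_prod_eq_sum_sum, Finset.sum_comm]
  · by_cases hz : w z = 0
    · simp only [r, hz, if_true]
      positivity
    · simpa [r, hz] using div_nonneg (hq.1 _) (hw_nonneg z)
  · by_cases hz : w z = 0
    · simp only [r, hz, if_true, Finset.sum_const, Finset.card_univ, nsmul_eq_mul]
      exact mul_inv_cancel₀ hcard
    · simp [r, hz, ← Finset.sum_div, w]
  · funext ⟨a, b, z⟩
    by_cases hz : w z = 0
    · simpa [mixture, hz] using le_antisymm (hz ▸ hq_le (a, b) z) (hq.1 _)
    · simp [mixture, r, hz, mul_div_cancel₀]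

section Caratheodory
variable {E : Type*} [AddCommGroup E]

theorem vectorSpan_le_ker_of_forall_eq {R F : Type*} [Ring R] [Module R E] [AddCommGroup F]
    [Module R F] (L : E →ₗ[R] F) {S : Set E} {c : F} (hS : ∀ v ∈ S, L v = c) :
    vectorSpan R S ≤ LinearMap.ker L := by
  rw [vectorSpan_def, Submodule.span_le]
  rintro _ ⟨u, hu, v, hv, rfl⟩
  simp [hS u hu, hS v hv]

variable [Module ℝ E] [FiniteDimensional ℝ E]

theorem exists_fin_convexCombination_card_le {S : Set E} {x : E} (hx : x ∈ convexHull ℝ S) :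
    ∃ k ≤ Module.finrank ℝ (vectorSpan ℝ S) + 1, ∃ (c : Fin k → ℝ) (y : Fin k → E),
      IsPmf c ∧ (∀ i, y i ∈ S) ∧ ∑ i, c i • y i = x := by
  obtain ⟨ι, _, y, c, hyS, hind, hpos, hc, rfl⟩ := eq_pos_convex_span_of_mem_convexHull hx
  have hk := hind.card_le_finrank_succ.trans
    (Nat.add_le_add_right (Submodule.finrank_mono (vectorSpan_mono ℝ hyS)) 1)
  set e := (Fintype.equivFin ι).symm
  exact ⟨_, hk, c ∘ e, y ∘ e, ⟨fun i => (hpos _).le, by rw [← hc, ← e.sum_comp]; rfl⟩,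
    fun i => hyS ⟨_, rfl⟩, e.sum_comp fun i => c i • y i⟩

theorem exists_fin_convexCombination_card_le_finrank (L : Module.Dual ℝ E) {S : Set E}
    (hS : ∀ v ∈ S, L v = 1) {x : E} (hx : x ∈ convexHull ℝ S) :
    ∃ k ≤ Module.finrank ℝ E, ∃ (c : Fin k → ℝ) (y : Fin k → E),
      IsPmf c ∧ (∀ i, y i ∈ S) ∧ ∑ i, c i • y i = x := by
  obtain ⟨v, hv⟩ := (convexHull_nonempty_iff.1 ⟨x, hx⟩)
  have hL : L ≠ 0 := fun h => by simpa [h] using hS v hv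
  obtain ⟨k, hk, hcomb⟩ := exists_fin_convexCombination_card_le hx
  refine ⟨k, hk.trans ?_, hcomb⟩
  rw [← Module.Dual.finrank_ker_add_one_of_ne_zero hL]
  exact Nat.add_le_add_right (Submodule.finrank_mono (vectorSpan_le_ker_of_forall_eq L hS)) 1

end Caratheodory

section Reduction
variable {α β ζ : Type} [Fintype α] [DecidableEq α] [Fintype β] [DecidableEq β]

theorem exists_fin_average_entropyLift_eq {w : ζ → ℝ} {r : ζ → α × β → ℝ} [Fintype ζ]
    (hw : IsPmf w) (hr : ∀ z, IsPmf (r z)) :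
    ∃ k ≤ Fintype.card α * Fintype.card β + 3, ∃ (c : Fin k → ℝ) (ρ : Fin k → α × β → ℝ),
      IsPmf c ∧ (∀ i, IsPmf (ρ i)) ∧
        ∑ i, c i • entropyLift (ρ i) = ∑ z, w z • entropyLift (r z) := by
  set S := entropyLift '' {r : α × β → ℝ | IsPmf r}
  set L : Module.Dual ℝ ((α × β → ℝ) × ℝ × ℝ × ℝ) :=
    (∑ s, LinearMap.proj s) ∘ₗ LinearMap.fst ℝ _ _
  have hLS : ∀ v ∈ S, L v = 1 := by
    rintro _ ⟨r, hr, rfl⟩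
    simpa [L, entropyLift] using hr.2
  have hmem : ∑ z, w z • entropyLift (r z) ∈ convexHull ℝ S :=
    (convex_convexHull ℝ S).sum_mem (fun z _ => hw.1 z) hw.2
      fun z _ => subset_convexHull ℝ S ⟨r z, hr z, rfl⟩
  obtain ⟨k, hk, c, y, hc, hyS, hsum⟩ := exists_fin_convexCombination_card_le_finrank L hLS hmem
  choose ρ hρ hρy using hyS
  refine ⟨k, hk.trans_eq ?_, c, ρ, hc, hρ, by simpa only [hρy] using hsum⟩
  simp [Module.finrank_prod, Module.finrank_fintype_fun_eq_card]

variable [Fintype ζ] [DecidableEq ζ]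

theorem exists_fin_tensionPoint_eq {q : α × β × ζ → ℝ} (hq : IsPmf q) :
    ∃ k ≤ Fintype.card α * Fintype.card β + 3, ∃ q' : α × β × Fin k → ℝ, IsPmf q' ∧
      distOf q' (fun ω => (ω.1, ω.2.1)) = distOf q (fun ω => (ω.1, ω.2.1)) ∧
      tensionPoint q' = tensionPoint q := by
  obtain ⟨w, r, hw, hr, rfl⟩ := exists_eq_mixture hq
  obtain ⟨k, hk, c, ρ, hc, hρ, hsum⟩ := exists_fin_average_entropyLift_eq hw hr
  refine ⟨k, hk, mixture c ρ, isPmf_mixture hc hρ, ?_, ?_⟩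
  · simpa [distOf_mixture_marginal, entropyLift, Prod.fst_sum] using congrArg Prod.fst hsum
  · rw [tensionPoint_mixture c hρ, tensionPoint_mixture w hr, hsum]

end Reduction

section Compactness
variable {α β ζ : Type} [Fintype α] [DecidableEq α] [Fintype β] [DecidableEq β]
  [Fintype ζ] [DecidableEq ζ]

theorem continuous_tensionPoint :
    Continuous (tensionPoint : (α × β × ζ → ℝ) → ℝ × ℝ × ℝ) := by
  unfold tensionPoint cmi
  fun_prop

theorem isCompact_image_tensionPoint (D : α × β → ℝ) :
    IsCompact (tensionPoint ''
      {q : α × β × ζ → ℝ | IsPmf q ∧ distOf q (fun ω => (ω.1, ω.2.1)) = D}) :=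
  ((isCompact_stdSimplex ℝ _).inter_right
    (isClosed_eq (continuous_distOf _) continuous_const)).image continuous_tensionPoint

end Compactness

theorem tension_eq_biUnion {Ω α β : Type} [Fintype Ω] [Fintype α] [DecidableEq α] [Fintype β]
    [DecidableEq β] (p : Ω → ℝ) (X : Ω → α) (Y : Ω → β) :
    tension p X Y = ⋃ m ∈ Set.Iic (Fintype.card α * Fintype.card β + 3),
      tensionPoint '' {q : α × β × Fin m → ℝ | IsPmf q ∧
        distOf q (fun ω => (ω.1, ω.2.1)) = distOf p (fun ω => (X ω, Y ω))} := by
  refine Set.Subset.antisymm ?_ ?_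
  · rintro _ ⟨m, q, hq, hqD, rfl⟩
    obtain ⟨k, hk, q', hq', hq'D, hq't⟩ := exists_fin_tensionPoint_eq hq
    exact Set.mem_biUnion hk ⟨q', ⟨hq', hq'D.trans hqD⟩, hq't⟩
  · simp only [Set.iUnion_subset_iff, Set.image_subset_iff]
    exact fun m _ q ⟨hq, hqD⟩ => ⟨m, q, hq, hqD, rfl⟩

theorem stmt13_general {Ω α β : Type} [Fintype Ω]
    [Fintype α] [DecidableEq α] [Fintype β] [DecidableEq β]
    (p : Ω → ℝ) (X : Ω → α) (Y : Ω → β) :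
    tension p X Y =
      { t | ∃ (m : ℕ), m ≤ Fintype.card α * Fintype.card β + 3 ∧
        ∃ q : α × β × Fin m → ℝ, IsPmf q ∧
          distOf q (fun w => (w.1, w.2.1)) = distOf p (fun ω => (X ω, Y ω)) ∧
          t = (cmi q (fun w => w.1) (fun w => w.2.2) (fun w => w.2.1),
               cmi q (fun w => w.2.1) (fun w => w.2.2) (fun w => w.1),
               cmi q (fun w => w.1) (fun w => w.2.1) (fun w => w.2.2)) } ∧
    IsCompact (tension p X Y) := by
  rw [tension_eq_biUnion]
  refine ⟨?_, (Set.finite_Iic _).isCompact_biUnion fun m _ => isCompact_image_tensionPoint _⟩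
  ext t
  simp only [Set.mem_iUnion, Set.mem_image, Set.mem_Iic, Set.mem_ofPred_eq, exists_prop, and_assoc,
    @eq_comm _ t]
  rfl

/-- The tension region is unchanged when `Z` is restricted to alphabets of
size at most `|𝒳|·|𝒴|+3`; consequently `T(X;Y)` is compact. -/
theorem stmt13 {Ω α β : Type} [Fintype Ω]
    [Fintype α] [DecidableEq α] [Fintype β] [DecidableEq β]
    (p : Ω → ℝ) (hp : IsPmf p) (X : Ω → α) (Y : Ω → β) :
    tension p X Y =
      { t | ∃ (m : ℕ), m ≤ Fintype.card α * Fintype.card β + 3 ∧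
        ∃ q : α × β × Fin m → ℝ, IsPmf q ∧
          distOf q (fun w => (w.1, w.2.1)) = distOf p (fun ω => (X ω, Y ω)) ∧
          t = (cmi q (fun w => w.1) (fun w => w.2.2) (fun w => w.2.1),
               cmi q (fun w => w.2.1) (fun w => w.2.2) (fun w => w.1),
               cmi q (fun w => w.1) (fun w => w.2.1) (fun w => w.2.2)) } ∧
    IsCompact (tension p X Y) :=
  stmt13_general p X Y
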